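/- (Variable drift, fixed-target lower bound.) Let k > 0 be a target, let (X_t)_{t∈ℕ} be integrable nonnegative real-valued random variables adapted to a filtration (F_t), with X_0 = x_0 > k deterministic, such that almost surely X_{t+1} ≤ X_t for all t (the process is monotonically decreasing), and let T = inf{t : X_t ≤ k}; assume T is almost surely finite. Suppose there are continuous, monotonically increasing functions c, h : [0, ∞) → (0, ∞) such that for all t, on the event {t < T}, almost surely X_{t+1} ≥ c(X_t) and E[X_t − X_{t+1} | F_t] ≤ h(c(X_t)). Then E[T] ≥ ∫_{k}^{x_0} 1/h(z) dz. -/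

import Mathlib

open MeasureTheory

/-- First time at which the process `X` takes a value `≤ k` (`⊤` if this never happens). -/
noncomputable def hitTimeLE {Ω : Type*} (X : ℕ → Ω → ℝ) (k : ℝ) (ω : Ω) : ℕ∞ :=
  sInf {r : ℕ∞ | ∃ t : ℕ, r = (t : ℕ∞) ∧ X t ω ≤ k}

/-!
The potential `g x = ∫ z in k..max x k, 1 / h z` vanishes at and below the target and equals the
claimed bound at `x0`. Before `T` we have `c (X t) ≤ X (t + 1) ≤ X t`, so `1 / h` is at most
`1 / h (c (X t))` on `[X (t + 1), X t]`, whence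
`g (X t) - g (X (t + 1)) ≤ (X t - X (t + 1)) / h (c (X t))`, a quantity with conditional
expectation at most `1`; after `T` the potential no longer moves. Summing,
`g x0 - E[g (X n)] ≤ ∑_{t < n} P(t < T)`, and `E[g (X n)] → 0` by dominated convergence because `T`
is a.s. finite; hence `g x0 ≤ ∑_t P(t < T) = E[T]`.
-/

open Filter Set Topology
open scoped ENNReal

lemma ENat.toENNReal_eq_tsum_ite_lt (a : ℕ∞) :
    (a : ℝ≥0∞) = ∑' n : ℕ, if (n : ℕ∞) < a then 1 else 0 := by
  induction a using ENat.recTopCoe with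
  | top => simp
  | coe m =>
    rw [tsum_eq_sum (s := Finset.range m) fun n hn => by simpa using hn,
      Finset.sum_ite_of_true fun n hn => by simpa using hn]
    simp

lemma lintegral_enat_eq_tsum_measure_lt {Ω : Type*} {m0 : MeasurableSpace Ω} (μ : Measure Ω)
    {f : Ω → ℕ∞} (hf : ∀ n : ℕ, MeasurableSet {ω | (n : ℕ∞) < f ω}) :
    ∫⁻ ω, (f ω : ℝ≥0∞) ∂μ = ∑' n : ℕ, μ {ω | (n : ℕ∞) < f ω} := by
  simp_rw [ENat.toENNReal_eq_tsum_ite_lt]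
  rw [lintegral_tsum fun n => (measurable_const.ite (hf n) measurable_const).aemeasurable]
  refine tsum_congr fun n => ?_
  rw [← lintegral_indicator_one (hf n)]
  simp [Set.indicator_apply]

lemma ENNReal.ofReal_le_tsum_of_sub_succ_le {u : ℕ → ℝ} {a : ℕ → ℝ≥0∞} (ha : ∀ t, a t ≠ ∞)
    (hu : Tendsto u atTop (𝓝 0)) (hstep : ∀ t, u t - u (t + 1) ≤ (a t).toReal) :
    ENNReal.ofReal (u 0) ≤ ∑' t, a t := by
  have hpartial (n : ℕ) : ENNReal.ofReal (u 0 - u n) ≤ ∑' t, a t := calc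
    ENNReal.ofReal (u 0 - u n) ≤ ENNReal.ofReal (∑ t ∈ Finset.range n, (a t).toReal) := by
      rw [← Finset.sum_range_sub' u n]
      exact ENNReal.ofReal_le_ofReal (Finset.sum_le_sum fun t _ => hstep t)
    _ = ∑ t ∈ Finset.range n, a t := by
      rw [ENNReal.ofReal_sum_of_nonneg fun t _ => ENNReal.toReal_nonneg]
      simp [ENNReal.ofReal_toReal (ha _)]
    _ ≤ ∑' t, a t := ENNReal.sum_le_tsum _
  have hlim : Tendsto (fun n => ENNReal.ofReal (u 0 - u n)) atTop (𝓝 (ENNReal.ofReal (u 0))) := by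
    simpa using ENNReal.tendsto_ofReal (tendsto_const_nhds.sub hu)
  exact le_of_tendsto' hlim hpartial

lemma integral_le_measureReal_of_le_mul_of_condExp {Ω : Type*} {m m0 : MeasurableSpace Ω}
    {μ : Measure Ω} [IsFiniteMeasure μ] (hm : m ≤ m0) {A : Set Ω} (hA : MeasurableSet[m] A)
    {D F G : Ω → ℝ} (hD : Integrable D μ) (hG : Integrable G μ) (hFG : Integrable (F * G) μ)
    (hF : StronglyMeasurable[m] F) (hDle : D ≤ᵐ[μ] F * G)
    (hDoff : ∀ᵐ ω ∂μ, ω ∉ A → D ω = 0) (hdrift : ∀ᵐ ω ∂μ, ω ∈ A → F ω * μ[G|m] ω ≤ 1) :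
    ∫ ω, D ω ∂μ ≤ μ.real A := by
  have hce : ∀ᵐ ω ∂μ, ω ∈ A → μ[D|m] ω ≤ 1 := by
    filter_upwards [condExp_mono hD hFG hDle, condExp_mul_of_stronglyMeasurable_left hF hFG hG,
      hdrift] with ω hmono hpull hω hωA
    exact (hmono.trans_eq hpull).trans (hω hωA)
  calc ∫ ω, D ω ∂μ = ∫ ω in A, D ω ∂μ := by
        rw [← integral_add_compl (hm A hA) hD, setIntegral_eq_zero_of_ae_eq_zero (t := Aᶜ) hDoff,
          add_zero]
    _ = ∫ ω in A, μ[D|m] ω ∂μ := (setIntegral_condExp hm hD hA).symm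
    _ ≤ ∫ _ in A, 1 ∂μ := setIntegral_mono_on_ae integrable_condExp.integrableOn
        (integrable_const 1).integrableOn (hm A hA) hce
    _ = μ.real A := by simp

lemma intervalIntegrable_of_antitoneOn_Ici {w : ℝ → ℝ} {a b c : ℝ} (hw : AntitoneOn w (Ici c))
    (ha : c ≤ a) (hb : c ≤ b) : IntervalIntegrable w volume a b :=
  (hw.mono fun _ hz => (le_min ha hb).trans hz.1).intervalIntegrable

lemma antitoneOn_inv_of_monotoneOn {h : ℝ → ℝ} {s : Set ℝ} (hh : MonotoneOn h s)
    (hpos : ∀ z ∈ s, 0 < h z) : AntitoneOn (fun z => (h z)⁻¹) s :=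
  fun _ ha _ hb hab => inv_anti₀ (hpos _ ha) (hh ha hb hab)

noncomputable def driftPotential (w : ℝ → ℝ) (k x : ℝ) : ℝ := ∫ z in k..max x k, w z

section driftPotential

variable {w : ℝ → ℝ} {k : ℝ}

lemma driftPotential_of_le {x : ℝ} (hx : x ≤ k) : driftPotential w k x = 0 := by
  simp [driftPotential, max_eq_right hx]

lemma driftPotential_nonneg (hk : 0 ≤ k) (hw0 : ∀ z, 0 ≤ z → 0 ≤ w z) (x : ℝ) :
    0 ≤ driftPotential w k x :=
  intervalIntegral.integral_nonneg (le_max_right x k) fun z hz => hw0 z (hk.trans hz.1)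

lemma driftPotential_sub_driftPotential (hk : 0 ≤ k) (hw : AntitoneOn w (Ici 0)) (x y : ℝ) :
    driftPotential w k y - driftPotential w k x = ∫ z in max x k..max y k, w z :=
  intervalIntegral.integral_interval_sub_left
    (intervalIntegrable_of_antitoneOn_Ici hw hk (hk.trans (le_max_right y k)))
    (intervalIntegrable_of_antitoneOn_Ici hw hk (hk.trans (le_max_right x k)))

lemma monotone_driftPotential (hk : 0 ≤ k) (hw : AntitoneOn w (Ici 0))
    (hw0 : ∀ z, 0 ≤ z → 0 ≤ w z) : Monotone (driftPotential w k) := fun x y hxy => by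
  rw [← sub_nonneg, driftPotential_sub_driftPotential hk hw]
  exact intervalIntegral.integral_nonneg (max_le_max hxy le_rfl)
    fun z hz => hw0 z (hk.trans ((le_max_right x k).trans hz.1))

lemma driftPotential_sub_le_mul (hk : 0 ≤ k) (hw : AntitoneOn w (Ici 0))
    (hw0 : ∀ z, 0 ≤ z → 0 ≤ w z) {a b y : ℝ} (hy : 0 ≤ y) (hyb : y ≤ b) (hba : b ≤ a) :
    driftPotential w k a - driftPotential w k b ≤ (a - b) * w y := by
  rw [driftPotential_sub_driftPotential hk hw]
  calc ∫ z in max b k..max a k, w z ≤ ∫ _ in max b k..max a k, w y := by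
        refine intervalIntegral.integral_mono_on (max_le_max hba le_rfl)
          (intervalIntegrable_of_antitoneOn_Ici hw (hk.trans (le_max_right b k))
            (hk.trans (le_max_right a k))) intervalIntegrable_const fun z hz => ?_
        have hyz : y ≤ z := hyb.trans ((le_max_left b k).trans hz.1)
        exact hw hy (hy.trans hyz) hyz
    _ = (max a k - max b k) * w y := by simp
    _ ≤ (a - b) * w y := by
        refine mul_le_mul_of_nonneg_right ?_ (hw0 y hy)
        rcases le_total a k with h | h <;> rcases le_total b k with h' | h' <;>
          simp [h, h'] <;> linarith

end driftPotential

section process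

variable {Ω : Type*} {m0 : MeasurableSpace Ω} {μ : Measure Ω} {X : ℕ → Ω → ℝ} {k : ℝ}

lemma hitTimeLE_lt_iff {ω : Ω} {t : ℕ} :
    (t : ℕ∞) < hitTimeLE X k ω ↔ ∀ s ≤ t, k < X s ω := by
  rw [← ENat.add_one_le_iff (ENat.natCast_ne_top t), hitTimeLE, le_sInf_iff]
  simp only [Set.mem_ofPred_eq, forall_exists_index, and_imp]
  rw [forall_comm]
  simp only [forall_eq]
  refine forall_congr' fun s => ?_
  rw [← not_lt, ← not_lt, not_imp_not]
  norm_cast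
  rw [Nat.lt_add_one_iff]

lemma exists_le_of_hitTimeLE_lt_top {ω : Ω} (hω : hitTimeLE X k ω < ⊤) : ∃ t, X t ω ≤ k := by
  obtain ⟨n, hn⟩ := ENat.ne_top_iff_exists.mp hω.ne
  have hnot : ¬ ∀ s ≤ n, k < X s ω := by rw [← hitTimeLE_lt_iff, ← hn]; exact lt_irrefl _
  push Not at hnot
  obtain ⟨s, -, hs⟩ := hnot
  exact ⟨s, hs⟩

lemma le_of_hitTimeLE_le {ω : Ω} {t : ℕ} (hanti : Antitone fun s => X s ω)
    (hT : hitTimeLE X k ω ≤ t) : X t ω ≤ k := by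
  rw [← not_lt, hitTimeLE_lt_iff] at hT
  push Not at hT
  obtain ⟨s, hst, hs⟩ := hT
  exact (hanti hst).trans hs

lemma measurableSet_hitTimeLE_lt {ℱ : Filtration ℕ m0} (hadapt : Adapted ℱ X) (t : ℕ) :
    MeasurableSet[ℱ t] {ω | (t : ℕ∞) < hitTimeLE X k ω} := by
  simp_rw [hitTimeLE_lt_iff, Set.ofPred_forall]
  exact MeasurableSet.iInter fun s => MeasurableSet.iInter fun hs =>
    (hadapt s).mono (ℱ.mono hs) le_rfl measurableSet_Ioi

lemma driftPotential_sub_succ_eq_zero {w : ℝ → ℝ} {ω : Ω} {t : ℕ}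
    (hanti : Antitone fun s => X s ω) (hT : hitTimeLE X k ω ≤ t) :
    driftPotential w k (X t ω) - driftPotential w k (X (t + 1) ω) = 0 := by
  rw [driftPotential_of_le (le_of_hitTimeLE_le hanti hT),
    driftPotential_of_le (le_of_hitTimeLE_le hanti (hT.trans (by simp))), sub_self]

lemma driftPotential_sub_succ_le_mul (hk : 0 ≤ k) {w : ℝ → ℝ} (hw : AntitoneOn w (Ici 0))
    (hw0 : ∀ z, 0 ≤ z → 0 ≤ w z) {c : ℝ → ℝ} (hcpos : ∀ z, 0 ≤ z → 0 < c z) {ω : Ω} {t : ℕ}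
    (hanti : Antitone fun s => X s ω) (hXt : 0 ≤ X t ω)
    (hstep : (t : ℕ∞) < hitTimeLE X k ω → c (X t ω) ≤ X (t + 1) ω) :
    driftPotential w k (X t ω) - driftPotential w k (X (t + 1) ω)
      ≤ (X t ω - X (t + 1) ω) * w (c (X t ω)) := by
  by_cases hA : (t : ℕ∞) < hitTimeLE X k ω
  · exact driftPotential_sub_le_mul hk hw hw0 (hcpos _ hXt).le (hstep hA) (hanti t.le_succ)
  · rw [driftPotential_sub_succ_eq_zero hanti (not_lt.mp hA)]
    exact mul_nonneg (sub_nonneg.2 (hanti t.le_succ)) (hw0 _ (hcpos _ hXt).le)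

lemma Monotone.integrable_comp_of_ae_le [IsFiniteMeasure μ] {g : ℝ → ℝ} (hg : Monotone g)
    (hg0 : ∀ x, 0 ≤ g x) {f : Ω → ℝ} (hf : Measurable f) {b : ℝ} (hfb : ∀ᵐ ω ∂μ, f ω ≤ b) :
    Integrable (fun ω => g (f ω)) μ :=
  (integrable_const (g b)).mono' (hg.measurable.comp hf).aestronglyMeasurable <|
    hfb.mono fun ω hω => by rw [Real.norm_of_nonneg (hg0 _)]; exact hg hω

lemma tendsto_integral_comp_of_exists_le [IsFiniteMeasure μ] {g : ℝ → ℝ} (hg : Monotone g)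
    (hg0 : ∀ x, 0 ≤ g x) (hgk : ∀ x ≤ k, g x = 0) (hX : ∀ t, Measurable (X t))
    (hanti : ∀ᵐ ω ∂μ, Antitone fun t => X t ω) {x0 : ℝ} (hX0 : ∀ ω, X 0 ω ≤ x0)
    (hhit : ∀ᵐ ω ∂μ, ∃ t, X t ω ≤ k) :
    Tendsto (fun n => ∫ ω, g (X n ω) ∂μ) atTop (𝓝 0) := by
  have hlim := tendsto_integral_of_dominated_convergence (μ := μ) (fun _ => g x0)
    (F := fun n ω => g (X n ω)) (f := 0)
    (fun n => (hg.measurable.comp (hX n)).aestronglyMeasurable) (integrable_const _)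
    (fun n => hanti.mono fun ω hω => by
      rw [Real.norm_of_nonneg (hg0 _)]; exact hg ((hω n.zero_le).trans (hX0 ω)))
    (by
      filter_upwards [hanti, hhit] with ω hω ⟨t, ht⟩
      exact tendsto_atTop_of_eventually_const fun n hn => hgk _ ((hω hn).trans ht))
  simpa using hlim

lemma Adapted.stronglyMeasurable_comp_of_antitoneOn {ℱ : Filtration ℕ m0} (hadapt : Adapted ℱ X)
    (hnonneg : ∀ t ω, 0 ≤ X t ω) {ψ : ℝ → ℝ} (hψ : AntitoneOn ψ (Ici 0)) (t : ℕ) :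
    StronglyMeasurable[ℱ t] fun ω => ψ (X t ω) := by
  have hψ' : Antitone fun x => ψ (max x 0) := fun x y hxy =>
    hψ (le_max_right x 0) (le_max_right y 0) (max_le_max hxy le_rfl)
  simpa only [Function.comp_def, max_eq_left (hnonneg t _)] using
    (hψ'.measurable.comp (hadapt t)).stronglyMeasurable

lemma integral_driftPotential_sub_succ_le [IsFiniteMeasure μ] (ℱ : Filtration ℕ m0)
    (hadapt : Adapted ℱ X) (hint : ∀ t, Integrable (X t) μ) (hnonneg : ∀ t ω, 0 ≤ X t ω)
    (hanti : ∀ᵐ ω ∂μ, Antitone fun t => X t ω) (hk : 0 ≤ k) {c h : ℝ → ℝ}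
    (hcmono : MonotoneOn c (Ici 0)) (hhmono : MonotoneOn h (Ici 0))
    (hcpos : ∀ z, 0 ≤ z → 0 < c z) (hhpos : ∀ z, 0 ≤ z → 0 < h z) {t : ℕ}
    (hYt : Integrable (fun ω => driftPotential (fun z => (h z)⁻¹) k (X t ω)) μ)
    (hYt1 : Integrable (fun ω => driftPotential (fun z => (h z)⁻¹) k (X (t + 1) ω)) μ)
    (hstep : ∀ᵐ ω ∂μ, (t : ℕ∞) < hitTimeLE X k ω → c (X t ω) ≤ X (t + 1) ω)
    (hdrift : ∀ᵐ ω ∂μ, (t : ℕ∞) < hitTimeLE X k ω →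
      (μ[fun ω' => X t ω' - X (t + 1) ω'|ℱ t]) ω ≤ h (c (X t ω))) :
    ∫ ω, driftPotential (fun z => (h z)⁻¹) k (X t ω) ∂μ
      - ∫ ω, driftPotential (fun z => (h z)⁻¹) k (X (t + 1) ω) ∂μ
      ≤ μ.real {ω | (t : ℕ∞) < hitTimeLE X k ω} := by
  have hw := antitoneOn_inv_of_monotoneOn hhmono hhpos
  have hw0 (z : ℝ) (hz : 0 ≤ z) : 0 ≤ (h z)⁻¹ := (inv_pos.2 (hhpos z hz)).le
  have hψ : AntitoneOn (fun x => (h (c x))⁻¹) (Ici 0) :=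
    hw.comp_MonotoneOn hcmono fun x hx => (hcpos x hx).le
  set F : Ω → ℝ := fun ω => (h (c (X t ω)))⁻¹
  set G : Ω → ℝ := fun ω => X t ω - X (t + 1) ω
  have hF0 (ω : Ω) : 0 ≤ F ω := hw0 _ (hcpos _ (hnonneg t ω)).le
  have hFm : StronglyMeasurable[ℱ t] F :=
    Adapted.stronglyMeasurable_comp_of_antitoneOn hadapt hnonneg hψ t
  have hFG : Integrable (F * G) μ := ((hint t).sub (hint (t + 1))).bdd_mul (c := (h (c 0))⁻¹)
    (hFm.mono (ℱ.le t)).aestronglyMeasurable <| .of_forall fun ω =>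
      (Real.norm_of_nonneg (hF0 ω)).trans_le (hψ self_mem_Ici (hnonneg t ω) (hnonneg t ω))
  have hDle : (fun ω => driftPotential (fun z => (h z)⁻¹) k (X t ω)
      - driftPotential (fun z => (h z)⁻¹) k (X (t + 1) ω)) ≤ᵐ[μ] F * G := by
    filter_upwards [hanti, hstep] with ω hω hstepω
    rw [Pi.mul_apply, mul_comm]
    exact driftPotential_sub_succ_le_mul hk hw hw0 hcpos hω (hnonneg t ω) hstepω
  have hdrift' : ∀ᵐ ω ∂μ, ω ∈ {ω | (t : ℕ∞) < hitTimeLE X k ω} → F ω * μ[G|ℱ t] ω ≤ 1 := by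
    filter_upwards [hdrift] with ω hω hA
    calc F ω * μ[G|ℱ t] ω ≤ F ω * h (c (X t ω)) := mul_le_mul_of_nonneg_left (hω hA) (hF0 ω)
      _ = 1 := inv_mul_cancel₀ (hhpos _ (hcpos _ (hnonneg t ω)).le).ne'
  rw [← integral_sub hYt hYt1]
  exact integral_le_measureReal_of_le_mul_of_condExp (ℱ.le t)
    (measurableSet_hitTimeLE_lt hadapt t) (hYt.sub hYt1) ((hint t).sub (hint (t + 1))) hFG hFm
    hDle (hanti.mono fun _ hω hA => driftPotential_sub_succ_eq_zero hω (not_lt.mp hA)) hdrift'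

end process

theorem variable_drift_fixed_target_lower_general
    {Ω : Type*} {m0 : MeasurableSpace Ω} (μ : Measure Ω) [IsProbabilityMeasure μ]
    (ℱ : Filtration ℕ m0) (X : ℕ → Ω → ℝ)
    (hadapt : Adapted ℱ X) (hint : ∀ t, Integrable (X t) μ)
    (hnonneg : ∀ t ω, 0 ≤ X t ω)
    (hdec : ∀ᵐ ω ∂μ, ∀ t : ℕ, X (t + 1) ω ≤ X t ω)
    (k x0 : ℝ) (hk : 0 < k) (hx0 : k < x0) (hX0 : ∀ ω, X 0 ω = x0)
    (hfin : ∀ᵐ ω ∂μ, hitTimeLE X k ω < ⊤)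
    (c h : ℝ → ℝ)
    (hcmono : MonotoneOn c (Set.Ici 0)) (hhmono : MonotoneOn h (Set.Ici 0))
    (hcpos : ∀ z, 0 ≤ z → 0 < c z) (hhpos : ∀ z, 0 ≤ z → 0 < h z)
    (hstep : ∀ t : ℕ, ∀ᵐ ω ∂μ, (t : ℕ∞) < hitTimeLE X k ω →
      c (X t ω) ≤ X (t + 1) ω)
    (hdrift : ∀ t : ℕ, ∀ᵐ ω ∂μ, (t : ℕ∞) < hitTimeLE X k ω →
      (μ[fun ω' => X t ω' - X (t + 1) ω'|ℱ t]) ω ≤ h (c (X t ω))) :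
    ENNReal.ofReal (∫ z in k..x0, 1 / h z)
      ≤ ∫⁻ ω, ((hitTimeLE X k ω : ℕ∞) : ENNReal) ∂μ := by
  have hanti : ∀ᵐ ω ∂μ, Antitone fun t => X t ω :=
    hdec.mono fun _ hω => antitone_nat_of_succ_le hω
  have hXm (t : ℕ) : Measurable (X t) := (hadapt t).mono (ℱ.le t) le_rfl
  set g := driftPotential (fun z => (h z)⁻¹) k
  have hw0 (z : ℝ) (hz : 0 ≤ z) : 0 ≤ (h z)⁻¹ := (inv_pos.2 (hhpos z hz)).le
  have hg : Monotone g :=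
    monotone_driftPotential hk.le (antitoneOn_inv_of_monotoneOn hhmono hhpos) hw0
  have hg0 := driftPotential_nonneg hk.le hw0
  have hY (t : ℕ) : Integrable (fun ω => g (X t ω)) μ := hg.integrable_comp_of_ae_le hg0 (hXm t)
    (hanti.mono fun ω hω => (hω t.zero_le).trans (hX0 ω).le)
  have hgx0 : ∫ z in k..x0, 1 / h z = ∫ ω, g (X 0 ω) ∂μ := by
    simp [g, driftPotential, hX0, max_eq_left hx0.le]
  rw [lintegral_enat_eq_tsum_measure_lt μ fun t => ℱ.le t _ (measurableSet_hitTimeLE_lt hadapt t),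
    hgx0]
  exact ENNReal.ofReal_le_tsum_of_sub_succ_le (fun t => measure_ne_top μ _)
    (tendsto_integral_comp_of_exists_le hg hg0 (fun _ => driftPotential_of_le) hXm hanti
      (fun ω => (hX0 ω).le) (hfin.mono fun _ => exists_le_of_hitTimeLE_lt_top))
    fun t => integral_driftPotential_sub_succ_le ℱ hadapt hint hnonneg hanti hk.le hcmono hhmono
      hcpos hhpos (hY t) (hY (t + 1)) (hstep t) (hdrift t)

/-- Variable drift, fixed-target lower bound: let the adapted integrable nonnegative process
be monotonically decreasing, start at the deterministic value `x0 > k > 0`, and have an a.s.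
finite hitting time `T = inf{t : X_t ≤ k}`. If `c, h : [0,∞) → (0,∞)` are continuous and
monotonically increasing with `X_{t+1} ≥ c(X_t)` and `E[X_t − X_{t+1} | F_t] ≤ h(c(X_t))`
before time `T`, then `E[T] ≥ ∫_k^{x0} 1/h(z) dz`. -/
theorem variable_drift_fixed_target_lower
    {Ω : Type*} {m0 : MeasurableSpace Ω} (μ : Measure Ω) [IsProbabilityMeasure μ]
    (ℱ : Filtration ℕ m0) (X : ℕ → Ω → ℝ)
    (hadapt : Adapted ℱ X) (hint : ∀ t, Integrable (X t) μ)
    (hnonneg : ∀ t ω, 0 ≤ X t ω)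
    (hdec : ∀ᵐ ω ∂μ, ∀ t : ℕ, X (t + 1) ω ≤ X t ω)
    (k x0 : ℝ) (hk : 0 < k) (hx0 : k < x0) (hX0 : ∀ ω, X 0 ω = x0)
    (hfin : ∀ᵐ ω ∂μ, hitTimeLE X k ω < ⊤)
    (c h : ℝ → ℝ)
    (hccont : ContinuousOn c (Set.Ici 0)) (hhcont : ContinuousOn h (Set.Ici 0))
    (hcmono : MonotoneOn c (Set.Ici 0)) (hhmono : MonotoneOn h (Set.Ici 0))
    (hcpos : ∀ z, 0 ≤ z → 0 < c z) (hhpos : ∀ z, 0 ≤ z → 0 < h z)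
    (hstep : ∀ t : ℕ, ∀ᵐ ω ∂μ, (t : ℕ∞) < hitTimeLE X k ω →
      c (X t ω) ≤ X (t + 1) ω)
    (hdrift : ∀ t : ℕ, ∀ᵐ ω ∂μ, (t : ℕ∞) < hitTimeLE X k ω →
      (μ[fun ω' => X t ω' - X (t + 1) ω'|ℱ t]) ω ≤ h (c (X t ω))) :
    ENNReal.ofReal (∫ z in k..x0, 1 / h z)
      ≤ ∫⁻ ω, ((hitTimeLE X k ω : ℕ∞) : ENNReal) ∂μ :=
  variable_drift_fixed_target_lower_general μ ℱ X hadapt hint hnonneg hdec k x0 hk hx0 hX0 hfin c h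
    hcmono hhmono hcpos hhpos hstep hdrift
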